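/- A graph is a split graph if and only if it contains no induced subgraph isomorphic to 2K_2, C_4, or C_5. -/

import Mathlib

open SimpleGraph Finset

/-- `s` is an independent set in `G`. -/
def IsIndepSet {α : Type*} (G : SimpleGraph α) (s : Set α) : Prop :=
  s.Pairwise fun a b => ¬ G.Adj a b

/-- `(G, A, B)` is a splitted graph: `A` an independent set and `B` a clique
partitioning the vertex set of `G`. -/
def IsSplitted {α : Type*} (G : SimpleGraph α) (A B : Set α) : Prop :=
  _root_.IsIndepSet G A ∧ G.IsClique B ∧ A ∪ B = Set.univ ∧ Disjoint A B

/-- `G` is a split graph. -/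
def IsSplitGraph {α : Type*} (G : SimpleGraph α) : Prop :=
  ∃ A B : Set α, IsSplitted G A B

/-- Tyshkevich composition `(G, A, B) ∘ H`: the disjoint union of `G` and `H`
together with all edges between the clique `B` and the vertices of `H`. -/
def comp {α β : Type*} (G : SimpleGraph α) (B : Set α) (H : SimpleGraph β) :
    SimpleGraph (α ⊕ β) where
  Adj x y :=
    match x, y with
    | Sum.inl a, Sum.inl a' => G.Adj a a'
    | Sum.inr b, Sum.inr b' => H.Adj b b'
    | Sum.inl a, Sum.inr _ => a ∈ B
    | Sum.inr _, Sum.inl a => a ∈ B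
  symm := ⟨by
    rintro (a | b) (a' | b') h
    · exact G.adj_symm h
    · exact h
    · exact h
    · exact H.adj_symm h⟩
  loopless := ⟨by
    rintro (a | b) h
    · exact G.irrefl h
    · exact H.irrefl h⟩

/-- The degree of a vertex, as the cardinality of its neighborhood. -/
noncomputable def deg {α : Type*} (G : SimpleGraph α) (v : α) : ℕ :=
  (G.neighborSet v).ncard

/-- The disjoint union of two edges. -/
def twoK2 : SimpleGraph (Fin 4) :=
  SimpleGraph.fromRel fun a b => (a.val = 0 ∧ b.val = 1) ∨ (a.val = 2 ∧ b.val = 3)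

/-- The 4-cycle. -/
def cycle4 : SimpleGraph (Fin 4) :=
  SimpleGraph.fromRel fun a b =>
    (a.val = 0 ∧ b.val = 1) ∨ (a.val = 1 ∧ b.val = 2) ∨
    (a.val = 2 ∧ b.val = 3) ∨ (a.val = 3 ∧ b.val = 0)

/-- The path on four vertices. -/
def path4 : SimpleGraph (Fin 4) :=
  SimpleGraph.fromRel fun a b =>
    (a.val = 0 ∧ b.val = 1) ∨ (a.val = 1 ∧ b.val = 2) ∨ (a.val = 2 ∧ b.val = 3)

/-- The 5-cycle. -/
def cycle5 : SimpleGraph (Fin 5) :=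
  SimpleGraph.fromRel fun a b =>
    (a.val = 0 ∧ b.val = 1) ∨ (a.val = 1 ∧ b.val = 2) ∨
    (a.val = 2 ∧ b.val = 3) ∨ (a.val = 3 ∧ b.val = 4) ∨ (a.val = 4 ∧ b.val = 0)

/-! Split graphs are closed under induced subgraphs, and `2K₂`, `C₄`, `C₅` are not split.

Conversely, let `G` be `{2K₂, C₄, C₅}`-free and let `K` be a clique maximising
`|K| + ∑_{v ∈ K} deg v`. Then every vertex outside `K` misses some vertex of `K`, and a vertex
outside `K` adjacent to all of `K - c` has degree at most `deg c`. Suppose `xy` is an edge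
outside `K`. A `C₄` forbids incomparable neighbourhoods of `x` and `y` in `K`, so some `c ∈ K`
is adjacent to neither, and `2K₂`-freeness makes `x` (say) adjacent to all of `K - c`. Comparing
degrees, `c` has a neighbour `z` that `x` misses, and a neighbour `w` that `y` misses; the
vertices `x, y, z, c, w` then carry an induced `C₄` or `C₅`. -/

section

variable {V W : Type*} {G : SimpleGraph V} {H : SimpleGraph W}

instance : DecidableRel twoK2.Adj := fun a b =>
  decidable_of_iff _ (fromRel_adj _ a b).symm

instance : DecidableRel cycle4.Adj := fun a b =>
  decidable_of_iff _ (fromRel_adj _ a b).symm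

instance : DecidableRel cycle5.Adj := fun a b =>
  decidable_of_iff _ (fromRel_adj _ a b).symm

lemma isIndContained_iff_exists_induce_iso :
    H ⊴ G ↔ ∃ s : Set V, Nonempty (G.induce s ≃g H) := by
  rw [isIndContained_iff_exists_iso_induce]
  exact exists_congr fun _ => ⟨fun ⟨e⟩ => ⟨e.symm⟩, fun ⟨e⟩ => ⟨e.symm⟩⟩

lemma isIndContained_of_adj_iff (f : W → V) (hf : Function.Injective f)
    (h : ∀ i j, G.Adj (f i) (f j) ↔ H.Adj i j) : H ⊴ G :=
  ⟨⟨⟨f, hf⟩, h _ _⟩⟩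

lemma twoK2_isIndContained {a b c d : V} (hab : G.Adj a b) (hcd : G.Adj c d)
    (hac : ¬ G.Adj a c) (had : ¬ G.Adj a d) (hbc : ¬ G.Adj b c) (hbd : ¬ G.Adj b d) :
    twoK2 ⊴ G := by
  refine isIndContained_of_adj_iff ![a, b, c, d] ?_ fun i j => ?_
  · intro i j h
    fin_cases i <;> fin_cases j <;> simp at h ⊢ <;> subst h <;> simp_all [G.adj_comm]
  · fin_cases i <;> fin_cases j <;> simp [twoK2, hab, hcd, hac, had, hbc, hbd, G.adj_comm]

lemma cycle4_isIndContained {a b c d : V} (hab : G.Adj a b) (hbc : G.Adj b c) (hcd : G.Adj c d)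
    (hda : G.Adj d a) (hac : ¬ G.Adj a c) (hbd : ¬ G.Adj b d) (hnac : a ≠ c) (hnbd : b ≠ d) :
    cycle4 ⊴ G := by
  refine isIndContained_of_adj_iff ![a, b, c, d] ?_ fun i j => ?_
  · intro i j h
    fin_cases i <;> fin_cases j <;> simp at h ⊢ <;> subst h <;> simp_all [G.adj_comm]
  · fin_cases i <;> fin_cases j <;>
      simp [cycle4, hab, hbc, hcd, hda, hda.symm, hac, hbd, G.adj_comm]

lemma cycle5_isIndContained {a b c d e : V} (hab : G.Adj a b) (hbc : G.Adj b c)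
    (hcd : G.Adj c d) (hde : G.Adj d e) (hea : G.Adj e a) (hac : ¬ G.Adj a c)
    (had : ¬ G.Adj a d) (hbd : ¬ G.Adj b d) (hbe : ¬ G.Adj b e) (hce : ¬ G.Adj c e) :
    cycle5 ⊴ G := by
  refine isIndContained_of_adj_iff ![a, b, c, d, e] ?_ fun i j => ?_
  · intro i j h
    fin_cases i <;> fin_cases j <;> simp at h ⊢ <;> subst h <;> simp_all [G.adj_comm]
  · fin_cases i <;> fin_cases j <;>
      simp [cycle5, hab, hbc, hcd, hde, hea, hea.symm, hac, had, hbd, hbe, hce, G.adj_comm]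

/-- `x y z c w` is a 5-cycle whose only possible chord is `zw`, which would close the 4-cycle
`x y z w`. -/
lemma cycle4_or_cycle5_isIndContained {x y z c w : V} (hxy : G.Adj x y) (hyz : G.Adj y z)
    (hzc : G.Adj z c) (hcw : G.Adj c w) (hwx : G.Adj w x) (hxz : ¬ G.Adj x z)
    (hxc : ¬ G.Adj x c) (hyc : ¬ G.Adj y c) (hyw : ¬ G.Adj y w) :
    cycle4 ⊴ G ∨ cycle5 ⊴ G := by
  by_cases hzw : G.Adj z w
  · refine .inl (cycle4_isIndContained hxy hyz hzw hwx hxz hyw ?_ ?_)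
    · rintro rfl; exact hxc hzc
    · rintro rfl; exact hyc hcw.symm
  · exact .inr (cycle5_isIndContained hxy hyz hzc hcw hwx hxz hxc hyc hyw hzw)

lemma IsSplitGraph.comap (f : H ↪g G) (hG : IsSplitGraph G) : IsSplitGraph H := by
  obtain ⟨A, B, hA, hB, hU, hD⟩ := hG
  refine ⟨f ⁻¹' A, f ⁻¹' B, fun a ha b hb hab => ?_, fun a ha b hb hab => ?_, ?_,
    hD.preimage f⟩
  · exact hA ha hb (f.injective.ne hab) ∘ f.map_adj_iff.mpr
  · exact f.map_adj_iff.mp (hB ha hb (f.injective.ne hab))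
  · rw [← Set.preimage_union, hU, Set.preimage_univ]

lemma IsSplitGraph.not_isIndContained (hG : IsSplitGraph G) (hH : ¬ IsSplitGraph H) :
    ¬ H ⊴ G :=
  fun ⟨f⟩ => hH (hG.comap f)

lemma isSplitGraph_iff_exists_finset [Fintype V] :
    IsSplitGraph G ↔ ∃ A : Finset V,
      (∀ a ∈ A, ∀ b ∈ A, ¬ G.Adj a b) ∧ ∀ a ∉ A, ∀ b ∉ A, a ≠ b → G.Adj a b := by
  classical
  constructor
  · rintro ⟨A, B, hA, hB, hU, hD⟩
    have hAc : G.IsClique Aᶜ := by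
      rwa [(isCompl_iff.mpr ⟨hD, codisjoint_iff.mpr hU⟩).compl_eq]
    refine ⟨A.toFinset, fun a ha b hb hab => ?_, fun a ha b hb => hAc ?_ ?_⟩ <;>
      simp_all only [Set.mem_toFinset, Set.mem_compl_iff, not_false_eq_true]
    exact hA ha hb hab.ne hab
  · rintro ⟨A, hA, hAc⟩
    refine ⟨A, (↑A)ᶜ, fun a ha b hb _ => hA a ha b hb, fun a ha b hb => hAc a ha b hb,
      Set.union_compl_self _, disjoint_compl_right⟩

lemma not_isSplitGraph_twoK2 : ¬ IsSplitGraph twoK2 := by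
  rw [isSplitGraph_iff_exists_finset]; decide

lemma not_isSplitGraph_cycle4 : ¬ IsSplitGraph cycle4 := by
  rw [isSplitGraph_iff_exists_finset]; decide

lemma not_isSplitGraph_cycle5 : ¬ IsSplitGraph cycle5 := by
  rw [isSplitGraph_iff_exists_finset]; decide

lemma exists_adj_not_adj_of_deg_le [Finite V] {v c w : V} (hdeg : deg G v ≤ deg G c)
    (hvw : G.Adj v w) (hcw : ¬ G.Adj c w) : ∃ z, G.Adj c z ∧ ¬ G.Adj v z := by
  by_contra! h
  have hsub : G.neighborSet c ⊆ G.neighborSet v \ {w} :=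
    fun u hu => ⟨h u hu, by rintro rfl; exact hcw hu⟩
  have := (Set.ncard_le_ncard hsub (Set.toFinite _)).trans_lt
    (Set.ncard_sdiff_singleton_lt_of_mem hvw (Set.toFinite _))
  exact this.not_ge hdeg

/-- Adding a vertex to `K` raises this weight, and exchanging `c ∈ K` for `v` changes it by
`deg v - deg c`. -/
def IsHeavyClique (G : SimpleGraph V) (K : Finset V) : Prop :=
  G.IsClique (K : Set V) ∧ ∀ K' : Finset V, G.IsClique (K' : Set V) →
    #K' + ∑ v ∈ K', deg G v ≤ #K + ∑ v ∈ K, deg G v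

lemma exists_isHeavyClique [Fintype V] (G : SimpleGraph V) : ∃ K, IsHeavyClique G K := by
  classical
  obtain ⟨K, hK, hmax⟩ :=
    exists_max_image ({K | G.IsClique (K : Set V)} : Finset (Finset V))
      (fun K => #K + ∑ v ∈ K, deg G v) ⟨∅, by simp⟩
  exact ⟨K, (mem_filter.mp hK).2, fun K' hK' => hmax K' (by simpa using hK')⟩

namespace IsHeavyClique

variable {K : Finset V} {v x y c : V}

lemma exists_not_adj (hK : IsHeavyClique G K) (hv : v ∉ K) : ∃ u ∈ K, ¬ G.Adj v u := by
  classical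
  by_contra! h
  have := hK.2 (insert v K) (by rw [coe_insert]; exact hK.1.insert fun u hu _ => h u hu)
  rw [card_insert_of_notMem hv, sum_insert hv] at this
  omega

lemma deg_le (hK : IsHeavyClique G K) (hc : c ∈ K) (hv : v ∉ K)
    (hvK : ∀ u ∈ K, u ≠ c → G.Adj v u) : deg G v ≤ deg G c := by
  classical
  have hv' : v ∉ K.erase c := fun h => hv (mem_of_mem_erase h)
  have := hK.2 (insert v (K.erase c)) (by
    rw [coe_insert]
    refine (hK.1.subset (coe_subset.mpr (erase_subset c K))).insert fun u hu _ => ?_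
    exact hvK u (mem_of_mem_erase hu) (ne_of_mem_erase hu))
  rw [card_insert_of_notMem hv', sum_insert hv', card_erase_of_mem hc,
    ← sum_erase_add _ _ hc] at this
  have := card_pos.mpr ⟨c, hc⟩
  omega

lemma exists_adj_adj_not_adj [Finite V] (hK : IsHeavyClique G K) (h2 : ¬ twoK2 ⊴ G)
    (hc : c ∈ K) (hx : x ∉ K) (hxK : ∀ u ∈ K, u ≠ c → G.Adj x u) (hxc : ¬ G.Adj x c)
    (hxy : G.Adj x y) (hyc : ¬ G.Adj y c) : ∃ z, G.Adj c z ∧ G.Adj y z ∧ ¬ G.Adj x z := by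
  obtain ⟨z, hcz, hxz⟩ :=
    exists_adj_not_adj_of_deg_le (hK.deg_le hc hx hxK) hxy (mt G.adj_symm hyc)
  refine ⟨z, hcz, by_contra fun hyz => h2 ?_, hxz⟩
  exact twoK2_isIndContained hxy hcz hxc hxz hyc hyz

lemma false_of_forall_adj_imp [Finite V] (hK : IsHeavyClique G K) (h2 : ¬ twoK2 ⊴ G)
    (h4 : ¬ cycle4 ⊴ G) (h5 : ¬ cycle5 ⊴ G) (hxy : G.Adj x y) (hx : x ∉ K) (hy : y ∉ K)
    (hyx : ∀ u ∈ K, G.Adj y u → G.Adj x u) : False := by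
  obtain ⟨c, hc, hxc⟩ := hK.exists_not_adj hx
  have hyc : ¬ G.Adj y c := mt (hyx c hc) hxc
  have hxK : ∀ u ∈ K, u ≠ c → G.Adj x u := by
    intro u hu huc
    by_contra hxu
    exact h2 (twoK2_isIndContained hxy (hK.1 hu hc huc) hxu hxc (mt (hyx u hu) hxu) hyc)
  obtain ⟨z, hcz, hyz, hxz⟩ := hK.exists_adj_adj_not_adj h2 hc hx hxK hxc hxy hyc
  obtain ⟨w, hcw, hxw, hyw⟩ : ∃ w, G.Adj c w ∧ G.Adj x w ∧ ¬ G.Adj y w := by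
    by_cases hyK : ∀ u ∈ K, u ≠ c → G.Adj y u
    · exact hK.exists_adj_adj_not_adj h2 hc hy hyK hyc hxy.symm hxc
    · push Not at hyK
      obtain ⟨a, ha, hac, hya⟩ := hyK
      exact ⟨a, hK.1 hc ha hac.symm, hxK a ha hac, hya⟩
  exact (cycle4_or_cycle5_isIndContained hxy hyz hcz.symm hcw hxw.symm hxz hxc hyc hyw).elim
    h4 h5

lemma isIndepSet_compl [Finite V] (hK : IsHeavyClique G K) (h2 : ¬ twoK2 ⊴ G)
    (h4 : ¬ cycle4 ⊴ G) (h5 : ¬ cycle5 ⊴ G) : _root_.IsIndepSet G (↑K)ᶜ := by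
  intro x hx y hy _ hxy
  simp only [Set.mem_compl_iff, mem_coe] at hx hy
  by_cases hyx : ∀ u ∈ K, G.Adj y u → G.Adj x u
  · exact hK.false_of_forall_adj_imp h2 h4 h5 hxy hx hy hyx
  by_cases hxy' : ∀ u ∈ K, G.Adj x u → G.Adj y u
  · exact hK.false_of_forall_adj_imp h2 h4 h5 hxy.symm hy hx hxy'
  push Not at hyx hxy'
  obtain ⟨b, hb, hyb, hxb⟩ := hyx
  obtain ⟨a, ha, hxa, hya⟩ := hxy'
  refine h4 (cycle4_isIndContained hxa (hK.1 ha hb ?_) hyb.symm hxy.symm hxb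
    (mt G.adj_symm hya) ?_ ?_)
  · rintro rfl; exact hxb hxa
  · rintro rfl; exact hx hb
  · rintro rfl; exact hy ha

end IsHeavyClique

lemma IsSplitGraph.of_free [Fintype V] (h2 : ¬ twoK2 ⊴ G) (h4 : ¬ cycle4 ⊴ G)
    (h5 : ¬ cycle5 ⊴ G) : IsSplitGraph G := by
  obtain ⟨K, hK⟩ := exists_isHeavyClique G
  exact ⟨(↑K)ᶜ, ↑K, hK.isIndepSet_compl h2 h4 h5, hK.1, Set.compl_union_self _,
    disjoint_compl_left⟩

end

/-- Földes–Hammer: a graph is split iff it has no induced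
subgraph isomorphic to `2K₂`, `C₄`, or `C₅`. -/
theorem stmt10 {V : Type*} [Fintype V] (G : SimpleGraph V) :
    IsSplitGraph G ↔
      ∀ s : Set V, ¬ Nonempty (G.induce s ≃g twoK2) ∧
        ¬ Nonempty (G.induce s ≃g cycle4) ∧ ¬ Nonempty (G.induce s ≃g cycle5) := by
  simp only [forall_and, ← not_exists, ← isIndContained_iff_exists_induce_iso]
  exact ⟨fun hG => ⟨hG.not_isIndContained not_isSplitGraph_twoK2,
      hG.not_isIndContained not_isSplitGraph_cycle4,
      hG.not_isIndContained not_isSplitGraph_cycle5⟩,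
    fun ⟨h2, h4, h5⟩ => .of_free h2 h4 h5⟩
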